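/- The twist of the congruence tangent to k = ∂_r is nonzero: for the metric g of formula (1), the 1-form κ = g(k, ·) satisfies κ ∧ dκ ≠ 0 everywhere on {y ≠ 0, |r| < π}; equivalently the null congruence generated by k is twisting. -/

import Mathlib

/-!
Because `α = dx + y³ du` annihilates `∂_r`, the dual form is a multiple `κ = f α` of `α`, with
`f = 1 / (2 s² y cos²(r/2))`. Then `κ ∧ dκ = f α ∧ (df ∧ α + f dα) = f² α ∧ dα = 3 f² y² dx ∧ dy ∧ du`,
which vanishes nowhere on the domain.
-/

noncomputable section

/-- Components of the 1-form α = dx + y³ du in coordinates (x,y,u,r). -/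
def alphaForm (y : ℝ) : Fin 4 → ℝ := ![1, 0, y ^ 3, 0]

/-- Components of the 1-form β = (2 + (7/3)cos r) dx + 2 sin r dy + (1/3) y³ cos r du + y dr. -/
def betaForm (y r : ℝ) : Fin 4 → ℝ :=
  ![2 + (7 / 3) * Real.cos r, 2 * Real.sin r, (1 / 3) * y ^ 3 * Real.cos r, y]

/-- The metric g of Nurowski's formula (1), as a matrix-valued function of the point
v = (x,y,u,r) ∈ ℝ⁴. -/
def gF (s : ℝ) (v : Fin 4 → ℝ) : Matrix (Fin 4) (Fin 4) ℝ := fun i j =>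
  (1 / (s ^ 2 * (v 1) ^ 2 * (Real.cos (v 3 / 2)) ^ 2)) *
    ((3 / 2) * ((if i = 0 then (1 : ℝ) else 0) * (if j = 0 then (1 : ℝ) else 0)
              + (if i = 1 then (1 : ℝ) else 0) * (if j = 1 then (1 : ℝ) else 0))
      + (alphaForm (v 1) i * betaForm (v 1) (v 3) j
          + alphaForm (v 1) j * betaForm (v 1) (v 3) i) / 2)

/-- Partial derivative of a real function on ℝ⁴ in the k-th coordinate direction. -/
def pd (F : (Fin 4 → ℝ) → ℝ) (v : Fin 4 → ℝ) (k : Fin 4) : ℝ :=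
  fderiv ℝ F v (Pi.single k 1)
/-- The metric-dual 1-form of k = ∂_r:  κ_j = g(∂_r, e_j) = g_{3j}. -/
def kappa (s : ℝ) (v : Fin 4 → ℝ) (j : Fin 4) : ℝ := gF s v 3 j

/-- Exterior derivative of κ: (dκ)_{ij} = ∂_i κ_j − ∂_j κ_i. -/
def dKappa (s : ℝ) (v : Fin 4 → ℝ) (i j : Fin 4) : ℝ :=
  pd (fun w => kappa s w j) v i - pd (fun w => kappa s w i) v j

lemma pd_mul {F G : (Fin 4 → ℝ) → ℝ} {v : Fin 4 → ℝ} (hF : DifferentiableAt ℝ F v)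
    (hG : DifferentiableAt ℝ G v) (k : Fin 4) :
    pd (fun w => F w * G w) v k = F v * pd G v k + G v * pd F v k := by
  simp only [pd, fderiv_fun_mul hF hG, add_apply, smul_apply, smul_eq_mul]

lemma pd_coord_pow (v : Fin 4 → ℝ) (k : Fin 4) (n : ℕ) :
    pd (fun w => w k ^ n) v k = n * v k ^ (n - 1) := by
  have h := ((hasFDerivAt_apply (𝕜 := ℝ) k v).pow n).fderiv
  simp [pd, h]

def kappaFactor (s : ℝ) (w : Fin 4 → ℝ) : ℝ :=
  1 / (s ^ 2 * w 1 ^ 2 * Real.cos (w 3 / 2) ^ 2) * w 1 / 2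

lemma kappa_eq_kappaFactor_mul (s : ℝ) (w : Fin 4 → ℝ) (j : Fin 4) :
    kappa s w j = kappaFactor s w * alphaForm (w 1) j := by
  fin_cases j <;> simp [kappa, gF, kappaFactor, alphaForm, betaForm] <;> ring

lemma cos_half_ne_zero {r : ℝ} (hr : |r| < Real.pi) : Real.cos (r / 2) ≠ 0 := by
  refine (Real.cos_pos_of_mem_Ioo ⟨?_, ?_⟩).ne' <;> linarith [abs_lt.mp hr]

lemma differentiableAt_kappaFactor {s : ℝ} (hs : s ≠ 0) {v : Fin 4 → ℝ} (hy : v 1 ≠ 0)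
    (hr : |v 3| < Real.pi) : DifferentiableAt ℝ (kappaFactor s) v := by
  have hc := cos_half_ne_zero hr
  unfold kappaFactor
  fun_prop (disch := positivity)

lemma twist_component_eq {s : ℝ} {v : Fin 4 → ℝ} (hf : DifferentiableAt ℝ (kappaFactor s) v) :
    kappa s v 0 * dKappa s v 1 2 - kappa s v 1 * dKappa s v 0 2 + kappa s v 2 * dKappa s v 0 1
      = 3 * (kappaFactor s v * v 1) ^ 2 := by
  have hcube : DifferentiableAt ℝ (fun w : Fin 4 → ℝ => w 1 ^ 3) v := by fun_prop
  simp only [dKappa, kappa_eq_kappaFactor_mul, alphaForm, Matrix.cons_val_zero,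
    Matrix.cons_val_one, Matrix.cons_val_two, Matrix.head_cons, Matrix.tail_cons, mul_one, mul_zero]
  rw [pd_mul hf hcube, pd_coord_pow]
  simp only [pd, fderiv_fun_const, Pi.zero_apply, zero_apply, Nat.cast_ofNat, Nat.add_one_sub_one]
  ring

/-- The congruence tangent to k = ∂_r is twisting: the 3-form κ∧dκ is nonzero at
every point of the domain {y ≠ 0, |r| < π}; i.e. some component
(κ∧dκ)(e_i,e_j,e_l) = κ_i (dκ)_{jl} − κ_j (dκ)_{il} + κ_l (dκ)_{ij} is nonzero. -/
theorem congruence_is_twisting (s : ℝ) (hs : s ≠ 0) (v : Fin 4 → ℝ)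
    (hy : v 1 ≠ 0) (hr : |v 3| < Real.pi) :
    ∃ i j l : Fin 4,
      kappa s v i * dKappa s v j l - kappa s v j * dKappa s v i l
        + kappa s v l * dKappa s v i j ≠ 0 := by
  refine ⟨0, 1, 2, ?_⟩
  rw [twist_component_eq (differentiableAt_kappaFactor hs hy hr)]
  have hc := cos_half_ne_zero hr
  have hf : kappaFactor s v ≠ 0 := by unfold kappaFactor; positivity
  positivity
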